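/- arXiv:0905.0564 — 5 statements merged into one kernel-verified Lean document; each statement's English description precedes it below -/
import Mathlib

section
/- Let Ω_{SR₁}, Ω_{R₁D}, Ω_{SR₂}, Ω_{R₂D} > 0 and 𝓕_{SR₁}, 𝓕_{R₁D}, 𝓕_{SR₂}, 𝓕_{R₂D} > 0, and let h(x) denote the four-component Gaussian-mixture density h(x) = (1/(√2·π^{3/2}·(Ω_{SR₁}+Ω_{R₁D})(Ω_{SR₂}+Ω_{R₂D})))·[ Ω_{SR₁}Ω_{SR₂}·exp(−x²/(2π²(Ω_{R₁D}𝓕_{R₁D}²+Ω_{R₂D}𝓕_{R₂D}²)))/√(Ω_{R₁D}𝓕_{R₁D}²+Ω_{R₂D}𝓕_{R₂D}²) + Ω_{R₁D}Ω_{SR₂}·exp(−x²/(2π²(Ω_{SR₁}𝓕_{SR₁}²+Ω_{R₂D}𝓕_{R₂D}²)))/√(Ω_{SR₁}𝓕_{SR₁}²+Ω_{R₂D}𝓕_{R₂D}²) + Ω_{R₂D}Ω_{SR₁}·exp(−x²/(2π²(Ω_{SR₂}𝓕_{SR₂}²+Ω_{R₁D}𝓕_{R₁D}²)))/√(Ω_{SR₂}𝓕_{SR₂}²+Ω_{R₁D}𝓕_{R₁D}²)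 + Ω_{R₁D}Ω_{R₂D}·exp(−x²/(2π²(Ω_{SR₁}𝓕_{SR₁}²+Ω_{SR₂}𝓕_{SR₂}²)))/√(Ω_{SR₁}𝓕_{SR₁}²+Ω_{SR₂}𝓕_{SR₂}²) ]. Then ∫₀^∞ x·h(x) dx = (√π/(√2·(Ω_{SR₁}+Ω_{R₁D})(Ω_{SR₂}+Ω_{R₂D})))·[ Ω_{SR₁}Ω_{SR₂}√(Ω_{R₁D}𝓕_{R₁D}²+Ω_{R₂D}𝓕_{R₂D}²) + Ω_{R₁D}Ω_{SR₂}√(Ω_{SR₁}𝓕_{SR₁}²+Ω_{R₂D}𝓕_{R₂D}²) + Ω_{R₂D}Ω_{SR₁}√(Ω_{SR₂}𝓕_{SR₂}²+Ω_{R₁D}𝓕_{R₁D}²) + Ω_{R₁D}Ω_{R₂D}√(Ω_{SR₁}𝓕_{SR₁}²+Ω_{SR₂}𝓕_{SR₂}²) ]. -/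
open MeasureTheory Real

/-!
Each of the four components of `h` is a centred Gaussian `exp (-x² / c)` with `c = 2π²a`, and
`∫₀^∞ x exp (-x² / c) dx = c / 2` (the integrand has antiderivative `-(c/2) exp (-x² / c)`).
Against the weight `1 / √a` this gives `π² √a`, and the prefactor `π² / π^(3/2)` is `√π`.
-/

theorem integral_Ioi_mul_exp_neg_mul_sq {b : ℝ} (hb : 0 < b) :
    ∫ x in Set.Ioi (0 : ℝ), x * exp (-b * x ^ 2) = (2 * b)⁻¹ := by
  apply Complex.ofReal_injective
  rw [← integral_complex_ofReal]
  push_cast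
  exact integral_mul_cexp_neg_mul_sq (by simpa using hb)

theorem integrableOn_Ioi_mul_exp_neg_sq_div {c : ℝ} (hc : 0 < c) :
    IntegrableOn (fun x : ℝ => x * exp (-x ^ 2 / c)) (Set.Ioi 0) := by
  simp_rw [neg_div, div_eq_inv_mul, ← neg_mul]
  exact (integrable_mul_exp_neg_mul_sq (inv_pos.2 hc)).integrableOn

theorem integral_Ioi_mul_exp_neg_sq_div {c : ℝ} (hc : 0 < c) :
    ∫ x in Set.Ioi (0 : ℝ), x * exp (-x ^ 2 / c) = c / 2 := by
  simp_rw [neg_div, div_eq_inv_mul, ← neg_mul]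
  rw [integral_Ioi_mul_exp_neg_mul_sq (inv_pos.2 hc)]
  field_simp

theorem integral_Ioi_mul_sum_exp_neg_sq_div {ι : Type*} (s : Finset ι) (w c : ι → ℝ)
    (hc : ∀ i ∈ s, 0 < c i) :
    ∫ x in Set.Ioi (0 : ℝ), x * ∑ i ∈ s, w i * exp (-x ^ 2 / c i) = ∑ i ∈ s, w i * (c i / 2) := by
  simp_rw [Finset.mul_sum, mul_left_comm _ (w _)]
  rw [integral_finsetSum s fun i hi => (integrableOn_Ioi_mul_exp_neg_sq_div (hc i hi)).const_mul _]
  refine Finset.sum_congr rfl fun i hi => ?_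
  rw [integral_const_mul, integral_Ioi_mul_exp_neg_sq_div (hc i hi)]

theorem rpow_three_halves_mul_sqrt {x : ℝ} (hx : 0 ≤ x) : x ^ ((3 : ℝ) / 2) * √x = x ^ 2 := by
  rw [sqrt_eq_rpow, ← rpow_add' hx (by norm_num)]
  norm_num

/-- The half first moment of the four-component Gaussian-mixture density of `Ż`
(eq. (14) of the paper): `∫₀^∞ ż f_{Ż}(ż) dż` in closed form. -/
theorem half_first_moment_derivative_density
    (ΩSR₁ ΩR₁D ΩSR₂ ΩR₂D FSR₁ FR₁D FSR₂ FR₂D : ℝ)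
    (hΩSR₁ : 0 < ΩSR₁) (hΩR₁D : 0 < ΩR₁D) (hΩSR₂ : 0 < ΩSR₂) (hΩR₂D : 0 < ΩR₂D)
    (hFSR₁ : 0 < FSR₁) (hFR₁D : 0 < FR₁D) (hFSR₂ : 0 < FSR₂) (hFR₂D : 0 < FR₂D)
    (h : ℝ → ℝ)
    (hh : h = fun x =>
      (1 / (Real.sqrt 2 * π ^ ((3 : ℝ) / 2) * ((ΩSR₁ + ΩR₁D) * (ΩSR₂ + ΩR₂D)))) *
        (ΩSR₁ * ΩSR₂ *
            Real.exp (-x ^ 2 / (2 * π ^ 2 * (ΩR₁D * FR₁D ^ 2 + ΩR₂D * FR₂D ^ 2))) /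
            Real.sqrt (ΩR₁D * FR₁D ^ 2 + ΩR₂D * FR₂D ^ 2) +
          ΩR₁D * ΩSR₂ *
            Real.exp (-x ^ 2 / (2 * π ^ 2 * (ΩSR₁ * FSR₁ ^ 2 + ΩR₂D * FR₂D ^ 2))) /
            Real.sqrt (ΩSR₁ * FSR₁ ^ 2 + ΩR₂D * FR₂D ^ 2) +
          ΩR₂D * ΩSR₁ *
            Real.exp (-x ^ 2 / (2 * π ^ 2 * (ΩSR₂ * FSR₂ ^ 2 + ΩR₁D * FR₁D ^ 2))) /
            Real.sqrt (ΩSR₂ * FSR₂ ^ 2 + ΩR₁D * FR₁D ^ 2) +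
          ΩR₁D * ΩR₂D *
            Real.exp (-x ^ 2 / (2 * π ^ 2 * (ΩSR₁ * FSR₁ ^ 2 + ΩSR₂ * FSR₂ ^ 2))) /
            Real.sqrt (ΩSR₁ * FSR₁ ^ 2 + ΩSR₂ * FSR₂ ^ 2))) :
    ∫ x in Set.Ioi (0 : ℝ), x * h x =
      (Real.sqrt π / (Real.sqrt 2 * ((ΩSR₁ + ΩR₁D) * (ΩSR₂ + ΩR₂D)))) *
        (ΩSR₁ * ΩSR₂ * Real.sqrt (ΩR₁D * FR₁D ^ 2 + ΩR₂D * FR₂D ^ 2) +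
          ΩR₁D * ΩSR₂ * Real.sqrt (ΩSR₁ * FSR₁ ^ 2 + ΩR₂D * FR₂D ^ 2) +
          ΩR₂D * ΩSR₁ * Real.sqrt (ΩSR₂ * FSR₂ ^ 2 + ΩR₁D * FR₁D ^ 2) +
          ΩR₁D * ΩR₂D * Real.sqrt (ΩSR₁ * FSR₁ ^ 2 + ΩSR₂ * FSR₂ ^ 2)) := by
  set a : Fin 4 → ℝ := ![ΩR₁D * FR₁D ^ 2 + ΩR₂D * FR₂D ^ 2, ΩSR₁ * FSR₁ ^ 2 + ΩR₂D * FR₂D ^ 2,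
    ΩSR₂ * FSR₂ ^ 2 + ΩR₁D * FR₁D ^ 2, ΩSR₁ * FSR₁ ^ 2 + ΩSR₂ * FSR₂ ^ 2]
  set k : Fin 4 → ℝ := ![ΩSR₁ * ΩSR₂, ΩR₁D * ΩSR₂, ΩR₂D * ΩSR₁, ΩR₁D * ΩR₂D]
  set P := (ΩSR₁ + ΩR₁D) * (ΩSR₂ + ΩR₂D)
  have hmix : ∀ x, x * h x = (1 / (√2 * π ^ ((3 : ℝ) / 2) * P)) *
      (x * ∑ i, k i / √(a i) * exp (-x ^ 2 / (2 * π ^ 2 * a i))) := by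
    intro x
    simp only [hh, Fin.sum_univ_four, a, k, Matrix.cons_val_zero, Matrix.cons_val_one,
      Matrix.cons_val]
    ring
  have hc : ∀ i ∈ Finset.univ, 0 < 2 * π ^ 2 * a i := by
    intro i _; fin_cases i <;> dsimp [a] <;> positivity
  have hterm : ∀ i, k i / √(a i) * (2 * π ^ 2 * a i / 2) = π ^ 2 * (k i * √(a i)) := by
    intro i
    calc k i / √(a i) * (2 * π ^ 2 * a i / 2) = π ^ 2 * (k i * (a i / √(a i))) := by ring
      _ = π ^ 2 * (k i * √(a i)) := by rw [div_sqrt]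
  simp_rw [hmix]
  rw [integral_const_mul, integral_Ioi_mul_sum_exp_neg_sq_div _ _ _ hc]
  simp_rw [hterm, ← Finset.mul_sum]
  rw [← rpow_three_halves_mul_sqrt pi_pos.le]
  simp only [Fin.sum_univ_four, a, k, Matrix.cons_val_zero, Matrix.cons_val_one,
    Matrix.cons_val]
  field_simp
end

section
/- Let Ω > 0 and 𝓕_{SR₁}, 𝓕_{R₁D}, 𝓕_{SR₂}, 𝓕_{R₂D} > 0. When Ω_{SR₁} = Ω_{R₁D} = Ω_{SR₂} = Ω_{R₂D} = Ω (i.i.d. fading), the two-relay OR switching-rate expression (π√(2Ω₁Ω₂)/((Ω₁+Ω₂)^{3/2}(Ω_{SR₁}+Ω_{R₁D})(Ω_{SR₂}+Ω_{R₂D})))·[ Ω_{SR₁}Ω_{SR₂}√(Ω_{R₁D}𝓕_{R₁D}²+Ω_{R₂D}𝓕_{R₂D}²) + Ω_{R₁D}Ω_{SR₂}√(Ω_{SR₁}𝓕_{SR₁}²+Ω_{R₂D}𝓕_{R₂D}²) + Ω_{R₂D}Ω_{SR₁}√(Ω_{SR₂}𝓕_{SR₂}²+Ω_{R₁D}𝓕_{R₁D}²)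 + Ω_{R₁D}Ω_{R₂D}√(Ω_{SR₁}𝓕_{SR₁}²+Ω_{SR₂}𝓕_{SR₂}²) ], with Ωᵢ = Ω_{SRᵢ}Ω_{RᵢD}/(Ω_{SRᵢ}+Ω_{RᵢD}), simplifies to (π/(4√2))·[ √(𝓕_{SR₁}²+𝓕_{SR₂}²) + √(𝓕_{SR₁}²+𝓕_{R₂D}²) + √(𝓕_{R₁D}²+𝓕_{SR₂}²) + √(𝓕_{R₁D}²+𝓕_{R₂D}²) ]; in particular it is independent of Ω. -/
open Real

/-! With all four mean-square gains equal to `Ω`, both harmonic gains are `Ω₁ = Ω₂ = Ω / 2`, so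
the prefactor equals `π (Ω / √2) / (Ω ^ (3/2) · 4Ω²)`, while every square root in the bracket
carries a common factor `√Ω` and every product of gains equals `Ω²`. The powers of `Ω` cancel,
leaving `π / (4√2)` times the sum of the Doppler square roots. -/

lemma mul_self_div_add_self (a : ℝ) : a * a / (a + a) = a / 2 := by
  rcases eq_or_ne a 0 with rfl | ha
  · simp
  · field_simp
    ring

lemma sqrt_mul_add_mul {c : ℝ} (hc : 0 ≤ c) (a b : ℝ) :
    √(c * a + c * b) = √c * √(a + b) := by
  rw [← mul_add, sqrt_mul hc]

lemma rpow_three_div_two_eq_sqrt_pow {x : ℝ} (hx : 0 ≤ x) : x ^ ((3 : ℝ) / 2) = √x ^ 3 := by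
  rw [rpow_div_two_eq_sqrt 3 hx, ← rpow_natCast]
  norm_num

lemma sqrt_two_mul_half_mul_half {x : ℝ} (hx : 0 ≤ x) : √(2 * (x / 2) * (x / 2)) = x / √2 := by
  rw [show 2 * (x / 2) * (x / 2) = x ^ 2 / 2 by ring, sqrt_div (sq_nonneg x), sqrt_sq hx]

theorem relay_switching_rate_OR_iid_general
    (Ω FSR₁ FR₁D FSR₂ FR₂D : ℝ) (hΩ : 0 < Ω)
    (Ω₁ Ω₂ : ℝ) (hΩ₁ : Ω₁ = Ω * Ω / (Ω + Ω)) (hΩ₂ : Ω₂ = Ω * Ω / (Ω + Ω)) :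
    (π * Real.sqrt (2 * Ω₁ * Ω₂) /
        ((Ω₁ + Ω₂) ^ ((3 : ℝ) / 2) * ((Ω + Ω) * (Ω + Ω)))) *
      (Ω * Ω * Real.sqrt (Ω * FR₁D ^ 2 + Ω * FR₂D ^ 2) +
        Ω * Ω * Real.sqrt (Ω * FSR₁ ^ 2 + Ω * FR₂D ^ 2) +
        Ω * Ω * Real.sqrt (Ω * FSR₂ ^ 2 + Ω * FR₁D ^ 2) +
        Ω * Ω * Real.sqrt (Ω * FSR₁ ^ 2 + Ω * FSR₂ ^ 2)) =
      (π / (4 * Real.sqrt 2)) *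
        (Real.sqrt (FSR₁ ^ 2 + FSR₂ ^ 2) + Real.sqrt (FSR₁ ^ 2 + FR₂D ^ 2) +
          Real.sqrt (FR₁D ^ 2 + FSR₂ ^ 2) + Real.sqrt (FR₁D ^ 2 + FR₂D ^ 2)) := by
  rw [mul_self_div_add_self] at hΩ₁ hΩ₂
  subst hΩ₁ hΩ₂
  rw [add_halves, rpow_three_div_two_eq_sqrt_pow hΩ.le, sqrt_two_mul_half_mul_half hΩ.le,
    sqrt_mul_add_mul hΩ.le, sqrt_mul_add_mul hΩ.le, sqrt_mul_add_mul hΩ.le,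
    sqrt_mul_add_mul hΩ.le, add_comm (FSR₂ ^ 2)]
  field_simp
  rw [sq_sqrt hΩ.le]
  ring

/-- Corollary 2, eq. (17) of the paper: in the i.i.d. case
`Ω_{SR₁} = Ω_{R₁D} = Ω_{SR₂} = Ω_{R₂D} = Ω` the closed-form relay switching rate of
two-relay opportunistic relaying simplifies to
`(π/(4√2)) [√(𝓕_{SR₁}²+𝓕_{SR₂}²) + √(𝓕_{SR₁}²+𝓕_{R₂D}²) + √(𝓕_{R₁D}²+𝓕_{SR₂}²)
  + √(𝓕_{R₁D}²+𝓕_{R₂D}²)]`, which is independent of `Ω`. -/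
theorem relay_switching_rate_OR_iid
    (Ω FSR₁ FR₁D FSR₂ FR₂D : ℝ) (hΩ : 0 < Ω)
    (hFSR₁ : 0 < FSR₁) (hFR₁D : 0 < FR₁D) (hFSR₂ : 0 < FSR₂) (hFR₂D : 0 < FR₂D)
    (Ω₁ Ω₂ : ℝ) (hΩ₁ : Ω₁ = Ω * Ω / (Ω + Ω)) (hΩ₂ : Ω₂ = Ω * Ω / (Ω + Ω)) :
    (π * Real.sqrt (2 * Ω₁ * Ω₂) /
        ((Ω₁ + Ω₂) ^ ((3 : ℝ) / 2) * ((Ω + Ω) * (Ω + Ω)))) *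
      (Ω * Ω * Real.sqrt (Ω * FR₁D ^ 2 + Ω * FR₂D ^ 2) +
        Ω * Ω * Real.sqrt (Ω * FSR₁ ^ 2 + Ω * FR₂D ^ 2) +
        Ω * Ω * Real.sqrt (Ω * FSR₂ ^ 2 + Ω * FR₁D ^ 2) +
        Ω * Ω * Real.sqrt (Ω * FSR₁ ^ 2 + Ω * FSR₂ ^ 2)) =
      (π / (4 * Real.sqrt 2)) *
        (Real.sqrt (FSR₁ ^ 2 + FSR₂ ^ 2) + Real.sqrt (FSR₁ ^ 2 + FR₂D ^ 2) +
          Real.sqrt (FR₁D ^ 2 + FSR₂ ^ 2) + Real.sqrt (FR₁D ^ 2 + FR₂D ^ 2)) :=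
  relay_switching_rate_OR_iid_general Ω FSR₁ FR₁D FSR₂ FR₂D hΩ Ω₁ Ω₂ hΩ₁ hΩ₂
end

section
/- Define g(L) = L(L−1)·Σ_{l=0}^{L−2} (−1)^l · C(L−2,l) · (1/(l+2))^{3/2} for integers L ≥ 2. Then g is strictly increasing: g(L+1) > g(L) for every L ≥ 2. Consequently, the relay switching rate √2·π𝓕·g(L) of L-relay opportunistic relaying over i.i.d. Rayleigh fading is a strictly increasing function of the number of relays L. -/
open Real

/-- `g L = L(L−1) Σ_{l=0}^{L−2} (−1)^l C(L−2,l) (1/(l+2))^{3/2}`, the normalized relay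
switching rate of `L`-relay opportunistic relaying over i.i.d. Rayleigh fading. -/
noncomputable def orSwitchingSum (L : ℕ) : ℝ :=
  (L : ℝ) * ((L : ℝ) - 1) *
    ∑ l ∈ Finset.range (L - 1),
      (-1 : ℝ) ^ l * (Nat.choose (L - 2) l : ℝ) * (1 / ((l : ℝ) + 2)) ^ ((3 : ℝ) / 2)

/-!
Write `A_s(m) = Σ_{l ≤ m} (-1)^l C(m,l) (l+2)^{-s}`, so that `g(n+2) = (n+2)(n+1) A_{3/2}(n)`.
Since `Γ(s) (l+2)^{-s} = ∫₀^∞ t^{s-1} e^{-(l+2)t} dt`, the binomial theorem gives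
`Γ(s) A_s(m) = ∫₀^∞ t^{s-1} e^{-2t} (1 - e^{-t})^m dt > 0`.
The identity `(n+1) C(n,l) = (n+1-l) C(n+1,l)` yields
`(n+3) A_{3/2}(n+1) - (n+1) A_{3/2}(n) = A_{1/2}(n+1)`, hence
`g(n+3) - g(n+2) = (n+2) A_{1/2}(n+1) > 0`.
-/

open MeasureTheory Set Finset

noncomputable def alternatingChooseSum (c s : ℝ) (m : ℕ) : ℝ :=
  ∑ l ∈ range (m + 1), (-1 : ℝ) ^ l * (m.choose l : ℝ) * (1 / ((l : ℝ) + c)) ^ s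

section

variable {c s : ℝ}

lemma integrableOn_rpow_mul_exp_neg_mul (hs : 0 < s) (hc : 0 < c) :
    IntegrableOn (fun t : ℝ ↦ t ^ (s - 1) * exp (-(c * t))) (Ioi 0) :=
  .of_integral_ne_zero (by rw [integral_rpow_mul_exp_neg_mul_Ioi hs hc]; positivity)

lemma rpow_mul_exp_neg_mul_mul_one_sub_exp_neg_pow (m : ℕ) (t : ℝ) :
    t ^ (s - 1) * exp (-(c * t)) * (1 - exp (-t)) ^ m =
      ∑ l ∈ range (m + 1),
        (-1 : ℝ) ^ l * (m.choose l : ℝ) * (t ^ (s - 1) * exp (-((l + c) * t))) := by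
  rw [show 1 - exp (-t) = -exp (-t) + 1 by ring, add_pow, mul_sum]
  refine sum_congr rfl fun l _ ↦ ?_
  have : exp (-((l + c) * t)) = exp (-t) ^ l * exp (-(c * t)) := by
    rw [← exp_nat_mul, ← exp_add]; ring_nf
  rw [this, neg_pow, one_pow]
  ring

lemma integrableOn_rpow_mul_exp_neg_mul_mul_one_sub_exp_neg_pow (hs : 0 < s) (hc : 0 < c)
    (m : ℕ) :
    IntegrableOn (fun t : ℝ ↦ t ^ (s - 1) * exp (-(c * t)) * (1 - exp (-t)) ^ m) (Ioi 0) := by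
  simp_rw [rpow_mul_exp_neg_mul_mul_one_sub_exp_neg_pow]
  exact integrable_finsetSum _ fun l _ ↦
    (integrableOn_rpow_mul_exp_neg_mul hs (by positivity)).const_mul _

lemma integral_rpow_mul_exp_neg_mul_mul_one_sub_exp_neg_pow (hs : 0 < s) (hc : 0 < c) (m : ℕ) :
    ∫ t in Ioi 0, t ^ (s - 1) * exp (-(c * t)) * (1 - exp (-t)) ^ m =
      Gamma s * alternatingChooseSum c s m := by
  simp_rw [rpow_mul_exp_neg_mul_mul_one_sub_exp_neg_pow]
  rw [integral_finsetSum _ fun l _ ↦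
    (integrableOn_rpow_mul_exp_neg_mul hs (by positivity)).const_mul _]
  rw [alternatingChooseSum, mul_sum]
  refine sum_congr rfl fun l _ ↦ ?_
  rw [integral_const_mul, integral_rpow_mul_exp_neg_mul_Ioi hs (by positivity)]
  ring

lemma alternatingChooseSum_pos (hs : 0 < s) (hc : 0 < c) (m : ℕ) :
    0 < alternatingChooseSum c s m := by
  have hpos : 0 < ∫ t in Ioi 0, t ^ (s - 1) * exp (-(c * t)) * (1 - exp (-t)) ^ m := by
    have hf : ∀ t ∈ Ioi (0 : ℝ), 0 < t ^ (s - 1) * exp (-(c * t)) * (1 - exp (-t)) ^ m :=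
      fun t (ht : 0 < t) ↦ by
        have : exp (-t) < 1 := exp_lt_one_iff.2 (neg_neg_of_pos ht)
        have : 0 < 1 - exp (-t) := by linarith
        positivity
    rw [setIntegral_pos_iff_support_of_nonneg_ae
      (ae_restrict_of_forall_mem measurableSet_Ioi fun t ht ↦ (hf t ht).le)
      (integrableOn_rpow_mul_exp_neg_mul_mul_one_sub_exp_neg_pow hs hc m)]
    calc (0 : ENNReal) < volume (Ioi (0 : ℝ)) := by rw [volume_Ioi]; exact ENNReal.zero_lt_top
      _ ≤ _ := measure_mono fun t ht ↦ show _ ∧ _ from ⟨(hf t ht).ne', ht⟩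
  rw [integral_rpow_mul_exp_neg_mul_mul_one_sub_exp_neg_pow hs hc] at hpos
  exact pos_of_mul_pos_right hpos (Gamma_pos_of_pos hs).le

lemma add_mul_alternatingChooseSum_succ_sub (hc : 0 < c) (n : ℕ) :
    (n + 1 + c) * alternatingChooseSum c (s + 1) (n + 1) -
        (n + 1) * alternatingChooseSum c (s + 1) n =
      alternatingChooseSum c s (n + 1) := by
  have hextend : alternatingChooseSum c (s + 1) n = ∑ l ∈ range (n + 2),
      (-1 : ℝ) ^ l * (n.choose l : ℝ) * (1 / ((l : ℝ) + c)) ^ (s + 1) := by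
    rw [sum_range_succ, Nat.choose_succ_self, Nat.cast_zero, mul_zero, zero_mul, add_zero,
      alternatingChooseSum]
  rw [hextend, alternatingChooseSum, alternatingChooseSum, mul_sum, mul_sum, ← sum_sub_distrib]
  refine sum_congr rfl fun l hlmem ↦ ?_
  have hl : l ≤ n + 1 := Nat.lt_succ_iff.1 (mem_range.1 hlmem)
  have hchoose : ((n + 1 : ℕ) : ℝ) * n.choose l = (n + 1).choose l * ((n : ℝ) + 1 - l) := by
    rw [mul_comm, ← Nat.cast_mul, Nat.choose_mul_succ_eq, Nat.cast_mul, Nat.cast_sub hl]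
    push_cast; ring
  have hx : 1 / ((l : ℝ) + c) * (l + c) = 1 := one_div_mul_cancel (by positivity)
  push_cast at hchoose
  rw [rpow_add_one (one_div_ne_zero (by positivity))]
  linear_combination (-(-1 : ℝ) ^ l * (1 / ((l : ℝ) + c)) ^ s * (1 / ((l : ℝ) + c))) * hchoose
    + (-1 : ℝ) ^ l * ((n + 1).choose l : ℝ) * (1 / ((l : ℝ) + c)) ^ s * hx

end

lemma orSwitchingSum_add_two (n : ℕ) :
    orSwitchingSum (n + 2) = (n + 2) * (n + 1) * alternatingChooseSum 2 (3 / 2) n := by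
  rw [orSwitchingSum, alternatingChooseSum, Nat.add_sub_cancel, show n + 2 - 1 = n + 1 by omega]
  push_cast
  ring

lemma orSwitchingSum_succ_sub (n : ℕ) :
    orSwitchingSum (n + 3) - orSwitchingSum (n + 2) =
      (n + 2) * alternatingChooseSum 2 (1 / 2) (n + 1) := by
  rw [← add_mul_alternatingChooseSum_succ_sub two_pos, orSwitchingSum_add_two,
    orSwitchingSum_add_two, show (1 / 2 + 1 : ℝ) = 3 / 2 by norm_num]
  push_cast
  ring

/-- The relay switching rate of `L`-relay opportunistic relaying over i.i.d. Rayleigh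
fading, `√2 π 𝓕 · g(L)`, is a strictly increasing function of the number of relays `L`:
`g(L+1) > g(L)` for every `L ≥ 2`. -/
theorem orSwitchingSum_strictMono :
    ∀ L : ℕ, 2 ≤ L →
      orSwitchingSum L < orSwitchingSum (L + 1) ∧
        ∀ F : ℝ, 0 < F →
          Real.sqrt 2 * π * F * orSwitchingSum L <
            Real.sqrt 2 * π * F * orSwitchingSum (L + 1) := by
  intro L hL
  obtain ⟨n, rfl⟩ := Nat.exists_eq_add_of_le' hL
  have hlt : orSwitchingSum (n + 2) < orSwitchingSum (n + 2 + 1) := by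
    rw [← sub_pos, orSwitchingSum_succ_sub]
    exact mul_pos (by positivity) (alternatingChooseSum_pos one_half_pos two_pos _)
  exact ⟨hlt, fun F hF ↦ by gcongr⟩
end

section
/- For all q₁, q₂ ∈ (0,1), define ρ₁ = q₂(q₂−1)[1 − q₁ + q₁²] / ( q₁(q₁−1)[1 − 2q₂ + 2q₂²] + q₂(q₂−1) ) and ρ₂ = q₁(q₁−1)[1 − q₂ + q₂²] / ( q₂(q₂−1)[1 − 2q₁ + 2q₁²] + q₁(q₁−1) ). Then both denominators are equal and nonzero, ρ₁, ρ₂ ∈ (0,1), and ρ₁ + ρ₂ = 1. -/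
/-! With `a = q₁(q₁ - 1)` and `b = q₂(q₂ - 1)`, both in `(-1, 0)`, one has `1 - q + q² = 1 + a`
and `1 - 2q + 2q² = 1 + 2a`, so both denominators equal `b(1 + a) + a(1 + b)`: the sum of the two
numerators, each of which is negative. Hence `ρ₁, ρ₂` are the two shares `x / (x + y)` and
`y / (x + y)` of a sum of two negative numbers. -/

open Set

lemma mul_sub_one_mem_Ioo {q : ℝ} (hq : q ∈ Ioo (0 : ℝ) 1) : q * (q - 1) ∈ Ioo (-1 : ℝ) 0 :=
  ⟨by nlinarith [hq.1, hq.2], mul_neg_of_pos_of_neg hq.1 (by linarith [hq.2])⟩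

lemma div_add_mem_Ioo_of_neg {x y : ℝ} (hx : x < 0) (hy : y < 0) : x / (x + y) ∈ Ioo (0 : ℝ) 1 :=
  ⟨div_pos_of_neg_of_neg hx (by linarith), (div_lt_one_of_neg (by linarith)).2 (by linarith)⟩

lemma div_add_add_div_add {x y : ℝ} (h : x + y ≠ 0) : x / (x + y) + y / (x + y) = 1 := by
  rw [← add_div, div_self h]

/-- The steady-state relay activation probabilities of the DSSC-B protocol
(eqs. (27)–(28) of the paper): for `q₁, q₂ ∈ (0,1)`, the two denominators agree and are
nonzero, `ρ₁, ρ₂ ∈ (0,1)`, and `ρ₁ + ρ₂ = 1`. -/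
theorem dssc_steady_state_probabilities
    (q₁ q₂ : ℝ) (hq₁ : q₁ ∈ Set.Ioo (0 : ℝ) 1) (hq₂ : q₂ ∈ Set.Ioo (0 : ℝ) 1)
    (d₁ d₂ ρ₁ ρ₂ : ℝ)
    (hd₁ : d₁ = q₁ * (q₁ - 1) * (1 - 2 * q₂ + 2 * q₂ ^ 2) + q₂ * (q₂ - 1))
    (hd₂ : d₂ = q₂ * (q₂ - 1) * (1 - 2 * q₁ + 2 * q₁ ^ 2) + q₁ * (q₁ - 1))
    (hρ₁ : ρ₁ = q₂ * (q₂ - 1) * (1 - q₁ + q₁ ^ 2) / d₁)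
    (hρ₂ : ρ₂ = q₁ * (q₁ - 1) * (1 - q₂ + q₂ ^ 2) / d₂) :
    d₁ = d₂ ∧ d₁ ≠ 0 ∧ ρ₁ ∈ Set.Ioo (0 : ℝ) 1 ∧ ρ₂ ∈ Set.Ioo (0 : ℝ) 1 ∧ ρ₁ + ρ₂ = 1 := by
  obtain ⟨ha₁, ha₀⟩ := mul_sub_one_mem_Ioo hq₁
  obtain ⟨hb₁, hb₀⟩ := mul_sub_one_mem_Ioo hq₂
  set a := q₁ * (q₁ - 1)
  set b := q₂ * (q₂ - 1)
  have hx : b * (1 + a) < 0 := mul_neg_of_neg_of_pos hb₀ (by linarith)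
  have hy : a * (1 + b) < 0 := mul_neg_of_neg_of_pos ha₀ (by linarith)
  have hd₁' : d₁ = b * (1 + a) + a * (1 + b) := by rw [hd₁]; ring
  have hd₂' : d₂ = b * (1 + a) + a * (1 + b) := by rw [hd₂]; ring
  have hρ₁' : ρ₁ = b * (1 + a) / (b * (1 + a) + a * (1 + b)) := by rw [hρ₁, hd₁']; ring
  have hρ₂' : ρ₂ = a * (1 + b) / (a * (1 + b) + b * (1 + a)) := by rw [hρ₂, hd₂']; ring
  have hd : b * (1 + a) + a * (1 + b) ≠ 0 := (add_neg hx hy).ne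
  refine ⟨hd₁'.trans hd₂'.symm, hd₁' ▸ hd, hρ₁' ▸ div_add_mem_Ioo_of_neg hx hy,
    hρ₂' ▸ div_add_mem_Ioo_of_neg hy hx, ?_⟩
  rw [hρ₁', hρ₂', add_comm (a * (1 + b)), div_add_add_div_add hd]
end

section
/- Let Ω_{SR₁}, Ω_{R₁D}, Ω_{SR₂}, Ω_{R₂D}, 𝓕_{SR₁}, 𝓕_{R₁D}, 𝓕_{SR₂}, 𝓕_{R₂D}, T, Γ > 0. Set Ωᵢ = Ω_{SRᵢ}Ω_{RᵢD}/(Ω_{SRᵢ}+Ω_{RᵢD}) and qᵢ = 1 − exp(−T/(ΓΩᵢ)) for i ∈ {1,2}; define Nᵢ(T) = √(2π)·( √(T/(ΓΩ_{SRᵢ}))·𝓕_{SRᵢ} + √(T/(ΓΩ_{RᵢD}))·𝓕_{RᵢD} )·exp(−T/(ΓΩᵢ)); define ρ₁ = q₂(q₂−1)[1−q₁+q₁²]/( q₁(q₁−1)[1−2q₂+2q₂²] + q₂(q₂−1) ) and ρ₂ = q₁(q₁−1)[1−q₂+q₂²]/( q₂(q₂−1)[1−2q₁+2q₁²] + q₁(q₁−1)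 ). Then ρ₁·N₁(T) + ρ₂·N₂(T) = [ √(2π)·e^{−T(Ω₁+Ω₂)/(ΓΩ₁Ω₂)}·(e^{2T/(ΓΩ₂)} − e^{T/(ΓΩ₂)})·(√(T/(ΓΩ_{SR₁}))𝓕_{SR₁} + √(T/(ΓΩ_{R₁D}))𝓕_{R₁D}) + √(2π)·e^{−T(Ω₁+Ω₂)/(ΓΩ₁Ω₂)}·(e^{2T/(ΓΩ₁)} − e^{T/(ΓΩ₁)})·(√(T/(ΓΩ_{SR₂}))𝓕_{SR₂} + √(T/(ΓΩ_{R₂D}))𝓕_{R₂D}) + √(2π)·(√(T/(ΓΩ_{SR₁}))𝓕_{SR₁} + √(T/(ΓΩ_{R₁D}))𝓕_{R₁D} + √(T/(ΓΩ_{SR₂}))𝓕_{SR₂} + √(T/(ΓΩ_{R₂D}))𝓕_{R₂D})·(e^{T/(ΓΩ₁)} − 1)(e^{T/(ΓΩ₂)} − 1) ] / [ 2e^{T/(ΓΩ₁)} − e^{2T/(ΓΩ₁)} + 2e^{T/(ΓΩ₂)} − e^{2T/(ΓΩ₂)} − 2e^{T(Ω₁+Ω₂)/(ΓΩ₁Ω₂)}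 + e^{T(Ω₁+2Ω₂)/(ΓΩ₁Ω₂)} + e^{T(2Ω₁+Ω₂)/(ΓΩ₁Ω₂)} − 2 ]. -/
open Real

/-!
With `u = exp (T/(ΓΩ₁))` and `v = exp (T/(ΓΩ₂))` one has `qᵢ = 1 - u⁻¹` resp. `1 - v⁻¹`, and every
exponential in the statement is a monomial in `u` and `v`. Both steady-state probabilities then
share the denominator `relayDenom u v`, and the claim becomes an identity of rational functions
in `u` and `v`.
-/

section Field

variable {K : Type*} [Field K]

/-- The steady-state probability `ρ₁` of the DSSC-B relay chain, as a function of `q₁` and `q₂`;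
`ρ₂` is `activeProb q₂ q₁`. -/
def activeProb (q₁ q₂ : K) : K :=
  q₂ * (q₂ - 1) * (1 - q₁ + q₁ ^ 2) /
    (q₁ * (q₁ - 1) * (1 - 2 * q₂ + 2 * q₂ ^ 2) + q₂ * (q₂ - 1))

def relayDenom (u v : K) : K :=
  2 * u - u ^ 2 + 2 * v - v ^ 2 - 2 * (u * v) + u ^ 2 * v + u * v ^ 2 - 2

theorem relayDenom_comm (u v : K) : relayDenom u v = relayDenom v u := by
  unfold relayDenom
  ring

/-- Numerator and denominator of `activeProb` both carry the factor `-1/(u²v²)`; cancelling it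
is valid even where `relayDenom u v = 0`, both sides being `0` there. -/
theorem activeProb_one_sub_inv {u v : K} (hu : u ≠ 0) (hv : v ≠ 0) :
    activeProb (1 - u⁻¹) (1 - v⁻¹) = (v - 1) * (u ^ 2 - u + 1) / relayDenom u v := by
  have hnum : (1 - v⁻¹) * (1 - v⁻¹ - 1) * (1 - (1 - u⁻¹) + (1 - u⁻¹) ^ 2) =
      -((v - 1) * (u ^ 2 - u + 1)) / (u ^ 2 * v ^ 2) := by
    field_simp
    ring
  have hden : (1 - u⁻¹) * (1 - u⁻¹ - 1) * (1 - 2 * (1 - v⁻¹) + 2 * (1 - v⁻¹) ^ 2) +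
      (1 - v⁻¹) * (1 - v⁻¹ - 1) = -relayDenom u v / (u ^ 2 * v ^ 2) := by
    unfold relayDenom
    field_simp
    ring
  rw [activeProb, hnum, hden, div_div_div_cancel_right₀ (by positivity), neg_div_neg_eq]

theorem activeProb_mul_add_activeProb_mul {u v : K} (hu : u ≠ 0) (hv : v ≠ 0) (c A B : K) :
    activeProb (1 - u⁻¹) (1 - v⁻¹) * (c * A * u⁻¹) +
        activeProb (1 - v⁻¹) (1 - u⁻¹) * (c * B * v⁻¹) =
      (c * (u * v)⁻¹ * (v ^ 2 - v) * A + c * (u * v)⁻¹ * (u ^ 2 - u) * B +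
          c * (A + B) * (u - 1) * (v - 1)) / relayDenom u v := by
  rw [activeProb_one_sub_inv hu hv, activeProb_one_sub_inv hv hu, relayDenom_comm v u,
    div_mul_eq_mul_div, div_mul_eq_mul_div, ← add_div]
  congr 1
  field_simp
  ring

end Field

theorem activeProb_exp_mul_add_activeProb_exp_mul (x y c A B : ℝ) :
    activeProb (1 - exp (-x)) (1 - exp (-y)) * (c * A * exp (-x)) +
        activeProb (1 - exp (-y)) (1 - exp (-x)) * (c * B * exp (-y)) =
      (c * exp (-(x + y)) * (exp (2 * y) - exp y) * A +
          c * exp (-(x + y)) * (exp (2 * x) - exp x) * B +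
          c * (A + B) * (exp x - 1) * (exp y - 1)) /
        (2 * exp x - exp (2 * x) + 2 * exp y - exp (2 * y) - 2 * exp (x + y) +
          exp (2 * x + y) + exp (x + 2 * y) - 2) := by
  have exp_two_mul (z : ℝ) : exp (2 * z) = exp z ^ 2 := by exact_mod_cast exp_nat_mul z 2
  simp only [exp_neg, exp_add, exp_two_mul]
  exact activeProb_mul_add_activeProb_mul (exp_ne_zero x) (exp_ne_zero y) c A B

theorem relay_switching_rate_DSSC_general
    (ΩSR₁ ΩR₁D ΩSR₂ ΩR₂D FSR₁ FR₁D FSR₂ FR₂D T Γ : ℝ)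
    (hΩSR₁ : 0 < ΩSR₁) (hΩR₁D : 0 < ΩR₁D) (hΩSR₂ : 0 < ΩSR₂) (hΩR₂D : 0 < ΩR₂D)
    (hΓ : 0 < Γ)
    (Ω₁ Ω₂ q₁ q₂ N₁ N₂ ρ₁ ρ₂ : ℝ)
    (hΩ₁ : Ω₁ = ΩSR₁ * ΩR₁D / (ΩSR₁ + ΩR₁D))
    (hΩ₂ : Ω₂ = ΩSR₂ * ΩR₂D / (ΩSR₂ + ΩR₂D))
    (hq₁ : q₁ = 1 - Real.exp (-T / (Γ * Ω₁)))
    (hq₂ : q₂ = 1 - Real.exp (-T / (Γ * Ω₂)))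
    (hN₁ : N₁ = Real.sqrt (2 * π) *
      (Real.sqrt (T / (Γ * ΩSR₁)) * FSR₁ + Real.sqrt (T / (Γ * ΩR₁D)) * FR₁D) *
      Real.exp (-T / (Γ * Ω₁)))
    (hN₂ : N₂ = Real.sqrt (2 * π) *
      (Real.sqrt (T / (Γ * ΩSR₂)) * FSR₂ + Real.sqrt (T / (Γ * ΩR₂D)) * FR₂D) *
      Real.exp (-T / (Γ * Ω₂)))
    (hρ₁ : ρ₁ = q₂ * (q₂ - 1) * (1 - q₁ + q₁ ^ 2) /
      (q₁ * (q₁ - 1) * (1 - 2 * q₂ + 2 * q₂ ^ 2) + q₂ * (q₂ - 1)))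
    (hρ₂ : ρ₂ = q₁ * (q₁ - 1) * (1 - q₂ + q₂ ^ 2) /
      (q₂ * (q₂ - 1) * (1 - 2 * q₁ + 2 * q₁ ^ 2) + q₁ * (q₁ - 1))) :
    ρ₁ * N₁ + ρ₂ * N₂ =
      (Real.sqrt (2 * π) * Real.exp (-(T * (Ω₁ + Ω₂)) / (Γ * Ω₁ * Ω₂)) *
          (Real.exp (2 * T / (Γ * Ω₂)) - Real.exp (T / (Γ * Ω₂))) *
          (Real.sqrt (T / (Γ * ΩSR₁)) * FSR₁ + Real.sqrt (T / (Γ * ΩR₁D)) * FR₁D) +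
        Real.sqrt (2 * π) * Real.exp (-(T * (Ω₁ + Ω₂)) / (Γ * Ω₁ * Ω₂)) *
          (Real.exp (2 * T / (Γ * Ω₁)) - Real.exp (T / (Γ * Ω₁))) *
          (Real.sqrt (T / (Γ * ΩSR₂)) * FSR₂ + Real.sqrt (T / (Γ * ΩR₂D)) * FR₂D) +
        Real.sqrt (2 * π) *
          (Real.sqrt (T / (Γ * ΩSR₁)) * FSR₁ + Real.sqrt (T / (Γ * ΩR₁D)) * FR₁D +
            Real.sqrt (T / (Γ * ΩSR₂)) * FSR₂ + Real.sqrt (T / (Γ * ΩR₂D)) * FR₂D) *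
          (Real.exp (T / (Γ * Ω₁)) - 1) * (Real.exp (T / (Γ * Ω₂)) - 1)) /
      (2 * Real.exp (T / (Γ * Ω₁)) - Real.exp (2 * T / (Γ * Ω₁)) +
        2 * Real.exp (T / (Γ * Ω₂)) - Real.exp (2 * T / (Γ * Ω₂)) -
        2 * Real.exp (T * (Ω₁ + Ω₂) / (Γ * Ω₁ * Ω₂)) +
        Real.exp (T * (Ω₁ + 2 * Ω₂) / (Γ * Ω₁ * Ω₂)) +
        Real.exp (T * (2 * Ω₁ + Ω₂) / (Γ * Ω₁ * Ω₂)) - 2) := by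
  have hΩ₁0 : Ω₁ ≠ 0 := by rw [hΩ₁]; positivity
  have hΩ₂0 : Ω₂ ≠ 0 := by rw [hΩ₂]; positivity
  have hΓ0 : Γ ≠ 0 := hΓ.ne'
  have hsum : T * (Ω₁ + Ω₂) / (Γ * Ω₁ * Ω₂) = T / (Γ * Ω₁) + T / (Γ * Ω₂) := by
    field_simp; ring
  have hsum₁ : T * (Ω₁ + 2 * Ω₂) / (Γ * Ω₁ * Ω₂) = 2 * (T / (Γ * Ω₁)) + T / (Γ * Ω₂) := by
    field_simp; ring
  have hsum₂ : T * (2 * Ω₁ + Ω₂) / (Γ * Ω₁ * Ω₂) = T / (Γ * Ω₁) + 2 * (T / (Γ * Ω₂)) := by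
    field_simp; ring
  rw [hρ₁, hρ₂, hN₁, hN₂, hq₁, hq₂]
  simp only [neg_div, hsum, hsum₁, hsum₂, mul_div_assoc 2 T]
  rw [← activeProb, ← activeProb, activeProb_exp_mul_add_activeProb_exp_mul, ← add_assoc]

/-- Theorem 3 of the paper (eq. (23)): the relay switching rate of the two-relay DSSC-B
protocol over i.n.i.d. Rayleigh fading, `SR_DSSC(T) = ρ₁ N₁(T) + ρ₂ N₂(T)`, in closed
form. Here `Ωᵢ` is the mean-square min-equivalent virtual gain of branch `i`,
`qᵢ = 1 − exp(−T/(ΓΩᵢ))`, `Nᵢ(T)` is the down-crossing rate of branch `i` at the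
threshold, and `ρᵢ` the steady-state probability that relay `Rᵢ` is active. -/
theorem relay_switching_rate_DSSC
    (ΩSR₁ ΩR₁D ΩSR₂ ΩR₂D FSR₁ FR₁D FSR₂ FR₂D T Γ : ℝ)
    (hΩSR₁ : 0 < ΩSR₁) (hΩR₁D : 0 < ΩR₁D) (hΩSR₂ : 0 < ΩSR₂) (hΩR₂D : 0 < ΩR₂D)
    (hFSR₁ : 0 < FSR₁) (hFR₁D : 0 < FR₁D) (hFSR₂ : 0 < FSR₂) (hFR₂D : 0 < FR₂D)
    (hT : 0 < T) (hΓ : 0 < Γ)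
    (Ω₁ Ω₂ q₁ q₂ N₁ N₂ ρ₁ ρ₂ : ℝ)
    (hΩ₁ : Ω₁ = ΩSR₁ * ΩR₁D / (ΩSR₁ + ΩR₁D))
    (hΩ₂ : Ω₂ = ΩSR₂ * ΩR₂D / (ΩSR₂ + ΩR₂D))
    (hq₁ : q₁ = 1 - Real.exp (-T / (Γ * Ω₁)))
    (hq₂ : q₂ = 1 - Real.exp (-T / (Γ * Ω₂)))
    (hN₁ : N₁ = Real.sqrt (2 * π) *
      (Real.sqrt (T / (Γ * ΩSR₁)) * FSR₁ + Real.sqrt (T / (Γ * ΩR₁D)) * FR₁D) *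
      Real.exp (-T / (Γ * Ω₁)))
    (hN₂ : N₂ = Real.sqrt (2 * π) *
      (Real.sqrt (T / (Γ * ΩSR₂)) * FSR₂ + Real.sqrt (T / (Γ * ΩR₂D)) * FR₂D) *
      Real.exp (-T / (Γ * Ω₂)))
    (hρ₁ : ρ₁ = q₂ * (q₂ - 1) * (1 - q₁ + q₁ ^ 2) /
      (q₁ * (q₁ - 1) * (1 - 2 * q₂ + 2 * q₂ ^ 2) + q₂ * (q₂ - 1)))
    (hρ₂ : ρ₂ = q₁ * (q₁ - 1) * (1 - q₂ + q₂ ^ 2) /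
      (q₂ * (q₂ - 1) * (1 - 2 * q₁ + 2 * q₁ ^ 2) + q₁ * (q₁ - 1))) :
    ρ₁ * N₁ + ρ₂ * N₂ =
      (Real.sqrt (2 * π) * Real.exp (-(T * (Ω₁ + Ω₂)) / (Γ * Ω₁ * Ω₂)) *
          (Real.exp (2 * T / (Γ * Ω₂)) - Real.exp (T / (Γ * Ω₂))) *
          (Real.sqrt (T / (Γ * ΩSR₁)) * FSR₁ + Real.sqrt (T / (Γ * ΩR₁D)) * FR₁D) +
        Real.sqrt (2 * π) * Real.exp (-(T * (Ω₁ + Ω₂)) / (Γ * Ω₁ * Ω₂)) *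
          (Real.exp (2 * T / (Γ * Ω₁)) - Real.exp (T / (Γ * Ω₁))) *
          (Real.sqrt (T / (Γ * ΩSR₂)) * FSR₂ + Real.sqrt (T / (Γ * ΩR₂D)) * FR₂D) +
        Real.sqrt (2 * π) *
          (Real.sqrt (T / (Γ * ΩSR₁)) * FSR₁ + Real.sqrt (T / (Γ * ΩR₁D)) * FR₁D +
            Real.sqrt (T / (Γ * ΩSR₂)) * FSR₂ + Real.sqrt (T / (Γ * ΩR₂D)) * FR₂D) *
          (Real.exp (T / (Γ * Ω₁)) - 1) * (Real.exp (T / (Γ * Ω₂)) - 1)) /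
      (2 * Real.exp (T / (Γ * Ω₁)) - Real.exp (2 * T / (Γ * Ω₁)) +
        2 * Real.exp (T / (Γ * Ω₂)) - Real.exp (2 * T / (Γ * Ω₂)) -
        2 * Real.exp (T * (Ω₁ + Ω₂) / (Γ * Ω₁ * Ω₂)) +
        Real.exp (T * (Ω₁ + 2 * Ω₂) / (Γ * Ω₁ * Ω₂)) +
        Real.exp (T * (2 * Ω₁ + Ω₂) / (Γ * Ω₁ * Ω₂)) - 2) :=
  relay_switching_rate_DSSC_general ΩSR₁ ΩR₁D ΩSR₂ ΩR₂D FSR₁ FR₁D FSR₂ FR₂D T Γ hΩSR₁ hΩR₁D hΩSR₂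
    hΩR₂D hΓ Ω₁ Ω₂ q₁ q₂ N₁ N₂ ρ₁ ρ₂ hΩ₁ hΩ₂ hq₁ hq₂ hN₁ hN₂ hρ₁ hρ₂
end
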